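/- arXiv:1412.4115 — 5 statements merged into one kernel-verified Lean document; each statement's English description precedes it below -/
import Mathlib

section
/- For 0 < |t| < 1 and 0 < |q| < 1 with t, q real, the q-exponential series ∑_{k=0}^∞ t^k / ∏_{n=1}^k (1 - q^n) equals the infinite product ∏_{k=0}^∞ 1/(1 - q^k t). -/
open Finset

/-- q-Pochhammer symbol `(a)_n = ∏_{j=0}^{n-1} (1 - a q^j)`. -/
noncomputable def qPoch (q a : ℝ) (n : ℕ) : ℝ := ∏ j ∈ Finset.range n, (1 - a * q ^ j)

/-- q-exponential `E_q(t) = ∏_{k=0}^∞ (1 - q^k t)⁻¹`. -/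
noncomputable def qExp (q t : ℝ) : ℝ := ∏' k : ℕ, (1 - q ^ k * t)⁻¹

/-- q-binomial coefficient. -/
noncomputable def qBinom (q : ℝ) (n k : ℕ) : ℝ :=
  qPoch q q n / (qPoch q q k * qPoch q q (n - k))

/-- Padé numerator polynomial `A_n(t)`. -/
noncomputable def padeA (q : ℝ) (n : ℕ) (t : ℝ) : ℝ :=
  ∑ k ∈ Finset.range (n + 1),
    qBinom q n k * q ^ (k * n) * qPoch q (q ^ (n + 1)) (n - k) * t ^ k

/-- Padé denominator polynomial `B_n(t)`. -/
noncomputable def padeB (q : ℝ) (n : ℕ) (t : ℝ) : ℝ :=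
  ∑ k ∈ Finset.range (n + 1),
    qBinom q n k * q ^ (k * (k - 1) / 2) * qPoch q (q ^ (n + 1)) (n - k) * (-t) ^ k

/-- Padé remainder `S_n(t)`. -/
noncomputable def padeS (q : ℝ) (n : ℕ) (t : ℝ) : ℝ :=
  (-1) ^ n * t ^ (2 * n + 1) * q ^ ((3 * n ^ 2 + n) / 2) *
    (qPoch q q n / qPoch q q (2 * n + 1)) *
    ∑' k : ℕ, qPoch q (q ^ (n + 1)) k * t ^ k / (qPoch q q k * qPoch q (q ^ (2 * n + 2)) k)

/-!
The series `E(s) = ∑ s^k / (q;q)_k` satisfies `E(q s) = (1 - s) E(s)`, because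
`(1 - q^k) / (q;q)_k = 1 / (q;q)_{k-1}`. Iterating, `E(t) = ∏_{j<n} (1 - q^j t)⁻¹ · E(q^n t)`,
and `E(q^n t) → E(0) = 1` by dominated convergence, so the partial products converge to `E(t)`.
-/

open Filter Topology

noncomputable def qExpSeries (q s : ℝ) : ℝ := ∑' k : ℕ, s ^ k / qPoch q q k

lemma qPoch_zero (q a : ℝ) : qPoch q a 0 = 1 := prod_range_zero _

lemma qPoch_succ (q a : ℝ) (n : ℕ) : qPoch q a (n + 1) = qPoch q a n * (1 - a * q ^ n) :=
  prod_range_succ _ n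

section

variable {q s : ℝ}

lemma abs_pow_mul_le (hq : |q| < 1) (s : ℝ) (k : ℕ) : |q ^ k * s| ≤ |s| := by
  rw [abs_mul, abs_pow]
  exact mul_le_of_le_one_left (abs_nonneg s) (pow_le_one₀ (abs_nonneg q) hq.le)

lemma one_sub_pow_mul_pos (hq : |q| < 1) (hs : |s| < 1) (k : ℕ) : 0 < 1 - q ^ k * s := by
  linarith [le_abs_self (q ^ k * s), abs_pow_mul_le hq s k]

lemma qPoch_self_pos (hq : |q| < 1) (n : ℕ) : 0 < qPoch q q n :=
  prod_pos fun j _ => mul_comm q (q ^ j) ▸ one_sub_pow_mul_pos hq hq j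

lemma summable_pow_div_qPoch (hq : |q| < 1) (hs : |s| < 1) :
    Summable fun k : ℕ => s ^ k / qPoch q q k := by
  rcases eq_or_ne s 0 with rfl | hs0
  · exact (summable_nat_add_iff 1).1 (by simp)
  refine summable_of_ratio_test_tendsto_lt_one hs (.of_forall fun k =>
    div_ne_zero (pow_ne_zero k hs0) (qPoch_self_pos hq k).ne') ?_
  have hratio : ∀ k : ℕ, ‖s ^ (k + 1) / qPoch q q (k + 1)‖ / ‖s ^ k / qPoch q q k‖
      = |s / (1 - q * q ^ k)| := by
    intro k
    have := (qPoch_self_pos hq k).ne'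
    rw [← norm_div, qPoch_succ, Real.norm_eq_abs]
    congr 1
    field_simp
    ring
  simp only [hratio]
  have hqk : Tendsto (fun k : ℕ => q * q ^ k) atTop (𝓝 0) := by
    simpa using (tendsto_pow_atTop_nhds_zero_of_abs_lt_one hq).const_mul q
  have hlim : Tendsto (fun k : ℕ => s / (1 - q * q ^ k)) atTop (𝓝 (s / (1 - 0))) :=
    tendsto_const_nhds.div (tendsto_const_nhds.sub hqk) (by norm_num)
  simpa using hlim.abs

lemma qExpSeries_zero : qExpSeries q 0 = 1 := by
  rw [qExpSeries, tsum_eq_single 0 fun k hk => by simp [hk]]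
  simp [qPoch_zero]

lemma qExpSeries_mul (hq : |q| < 1) (hs : |s| < 1) :
    qExpSeries q (q * s) = (1 - s) * qExpSeries q s := by
  have hqs : |q * s| < 1 := by
    simpa using (abs_pow_mul_le hq s 1).trans_lt hs
  set d : ℕ → ℝ := fun k => s ^ k / qPoch q q k - (q * s) ^ k / qPoch q q k
  have hd : Summable d := (summable_pow_div_qPoch hq hs).sub (summable_pow_div_qPoch hq hqs)
  have hd_succ : ∀ k, d (k + 1) = s * (s ^ k / qPoch q q k) := by
    intro k
    have := (qPoch_self_pos hq k).ne'
    have : 1 - q * q ^ k ≠ 0 := by rw [mul_comm]; exact (one_sub_pow_mul_pos hq hq k).ne'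
    simp only [d, qPoch_succ, mul_pow]
    field_simp
    ring
  have hdiff : qExpSeries q s - qExpSeries q (q * s) = s * qExpSeries q s := by
    rw [qExpSeries, qExpSeries, ← (summable_pow_div_qPoch hq hs).tsum_sub
      (summable_pow_div_qPoch hq hqs), hd.tsum_eq_zero_add]
    simp [d, hd_succ, tsum_mul_left]
  linarith

lemma qExpSeries_pow_mul (hq : |q| < 1) (hs : |s| < 1) (n : ℕ) :
    qExpSeries q (q ^ n * s) = (∏ j ∈ range n, (1 - q ^ j * s)) * qExpSeries q s := by
  induction n with
  | zero => simp
  | succ n ih =>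
    rw [pow_succ', mul_assoc, qExpSeries_mul hq ((abs_pow_mul_le hq s n).trans_lt hs), ih,
      prod_range_succ]
    ring

lemma tendsto_qExpSeries_nhds_zero (hq : |q| < 1) :
    Tendsto (qExpSeries q) (𝓝 0) (𝓝 1) := by
  rw [← qExpSeries_zero (q := q)]
  refine tendsto_tsum_of_dominated_convergence (bound := fun k => (1 / 2 : ℝ) ^ k / qPoch q q k)
    (summable_pow_div_qPoch hq (by norm_num [abs_of_pos]))
    (fun k => ((continuous_pow k).div_const _).tendsto 0) ?_
  filter_upwards [Metric.closedBall_mem_nhds (0 : ℝ) (by norm_num : (0 : ℝ) < 1 / 2)] with x hx k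
  rw [Metric.mem_closedBall, dist_zero_right] at hx
  rw [norm_div, norm_pow, Real.norm_of_nonneg (qPoch_self_pos hq k).le]
  gcongr
  exact (qPoch_self_pos hq k).le

lemma multipliable_inv_one_sub_pow_mul (hq : |q| < 1) (hs : |s| < 1) :
    Multipliable fun k : ℕ => (1 - q ^ k * s)⁻¹ := by
  have hgeom : Summable fun k : ℕ => -(q ^ k * s) :=
    ((summable_geometric_of_abs_lt_one hq).mul_right s).neg
  refine Real.multipliable_of_summable_log (fun k => inv_pos.2 (one_sub_pow_mul_pos hq hs k)) ?_
  simpa [Real.log_inv, sub_eq_add_neg] using (Real.summable_log_one_add_of_summable hgeom).neg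

end

theorem qExp_series_eq_tprod_general (q t : ℝ) (hq1 : |q| < 1) (ht1 : |t| < 1) :
    ∑' k : ℕ, t ^ k / qPoch q q k = ∏' k : ℕ, (1 - q ^ k * t)⁻¹ := by
  have hpartial := (multipliable_inv_one_sub_pow_mul hq1 ht1).hasProd.tendsto_prod_nat
  have hshift : Tendsto (fun n : ℕ => qExpSeries q (q ^ n * t)) atTop (𝓝 1) :=
    (tendsto_qExpSeries_nhds_zero hq1).comp <| by
      simpa using (tendsto_pow_atTop_nhds_zero_of_abs_lt_one hq1).mul_const t
  have hconst : ∀ n : ℕ,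
      (∏ j ∈ range n, (1 - q ^ j * t)⁻¹) * qExpSeries q (q ^ n * t) = qExpSeries q t := by
    intro n
    rw [qExpSeries_pow_mul hq1 ht1, ← mul_assoc, ← prod_mul_distrib,
      prod_eq_one fun j _ => inv_mul_cancel₀ (one_sub_pow_mul_pos hq1 ht1 j).ne', one_mul]
  have hlim := hpartial.mul hshift
  simp only [hconst, mul_one] at hlim
  exact tendsto_nhds_unique tendsto_const_nhds hlim

/-- Euler's identity: the q-exponential series equals the infinite product. -/
theorem qExp_series_eq_tprod (q t : ℝ) (hq0 : 0 < |q|) (hq1 : |q| < 1)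
    (ht0 : 0 < |t|) (ht1 : |t| < 1) :
    ∑' k : ℕ, t ^ k / qPoch q q k = ∏' k : ℕ, (1 - q ^ k * t)⁻¹ :=
  qExp_series_eq_tprod_general q t hq1 ht1
end

section
/- Degree bound in q: deg_q ((t)_K B_n(q^K t)) ≤ (K^2−K)/2 + (3n^2+n)/2 when 0 ≤ K ≤ n, and ≤ (K^2−K)/2 + (n^2−n)/2 + nK when K > n. -/
open Finset

/-- Evaluate `P ∈ ℤ[t][q]` (outer variable `q`, inner variable `t`) at real `q, t`. -/
noncomputable def evalTQ (P : Polynomial (Polynomial ℤ)) (q t : ℝ) : ℝ :=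
  Polynomial.eval q (P.map (Polynomial.eval₂RingHom (Int.castRingHom ℝ) t))

/-!
Write `(t)_K B_n(q^K t)` as an explicit element of `ℤ[t][q]`, replacing each `q`-binomial
coefficient by its Gaussian polynomial. An element of `ℤ[t][q]` is determined by its values at
real `t` and infinitely many `q`, so `P` is this polynomial, and its degree is bounded termwise.
Since `C(k,2) + C(n-k,2) + k(n-k) = C(n,2)`, the `k`-th summand of `B_n(q^K t)` has `q`-degree at
most `C(n,2) + (n-k)(n+1) + kK`, which is at most `C(n,2) + n(n+1)` when `K ≤ n` and at most
`C(n,2) + nK` when `K > n`; the factor `(t)_K` adds `C(K,2)`.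
-/

open Polynomial

noncomputable def gaussBinom (R : Type*) [CommSemiring R] : ℕ → ℕ → R[X]
  | _, 0 => 1
  | 0, _ + 1 => 0
  | n + 1, k + 1 => gaussBinom R n k + X ^ (k + 1) * gaussBinom R n (k + 1)

section GaussBinom

variable (R : Type*) [CommSemiring R]

@[simp] lemma gaussBinom_zero_right (n : ℕ) : gaussBinom R n 0 = 1 := by cases n <;> rfl

@[simp] lemma gaussBinom_zero_succ (k : ℕ) : gaussBinom R 0 (k + 1) = 0 := rfl

lemma gaussBinom_succ_succ (n k : ℕ) :
    gaussBinom R (n + 1) (k + 1) = gaussBinom R n k + X ^ (k + 1) * gaussBinom R n (k + 1) :=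
  rfl

lemma gaussBinom_eq_zero_of_lt : ∀ {n k : ℕ}, n < k → gaussBinom R n k = 0
  | 0, _ + 1, _ => rfl
  | n + 1, k + 1, h => by
    rw [gaussBinom_succ_succ, gaussBinom_eq_zero_of_lt (by omega),
      gaussBinom_eq_zero_of_lt (by omega), mul_zero, add_zero]

@[simp] lemma gaussBinom_self (n : ℕ) : gaussBinom R n n = 1 := by
  induction n with
  | zero => rfl
  | succ n ih =>
    rw [gaussBinom_succ_succ, ih, gaussBinom_eq_zero_of_lt R n.lt_succ_self, mul_zero, add_zero]

lemma map_gaussBinom {S : Type*} [CommSemiring S] (f : R →+* S) :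
    ∀ n k : ℕ, (gaussBinom R n k).map f = gaussBinom S n k
  | _, 0 => by simp
  | 0, _ + 1 => by simp
  | n + 1, k + 1 => by simp [gaussBinom_succ_succ, map_gaussBinom f n]

lemma natDegree_gaussBinom_le : ∀ n k : ℕ, (gaussBinom R n k).natDegree ≤ k * (n - k)
  | _, 0 => by simp
  | 0, _ + 1 => by simp
  | n + 1, k + 1 => by
    rw [gaussBinom_succ_succ]
    refine (natDegree_add_le _ _).trans (max_le ?_ ?_)
    · exact (natDegree_gaussBinom_le n k).trans (Nat.mul_le_mul (by omega) (by omega))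
    · rcases le_or_gt n k with h | h
      · simp [gaussBinom_eq_zero_of_lt R (Nat.lt_succ_of_le h)]
      · refine (natDegree_mul_le_of_le (natDegree_X_pow_le _)
          (natDegree_gaussBinom_le n (k + 1))).trans ?_
        rw [show n + 1 - (k + 1) = n - (k + 1) + 1 by omega, Nat.mul_succ]
        omega

end GaussBinom

lemma eval_gaussBinom_mul_qPoch (q : ℝ) :
    ∀ {n k : ℕ}, k ≤ n →
      (gaussBinom ℝ n k).eval q * (qPoch q q k * qPoch q q (n - k)) = qPoch q q n
  | n, 0, _ => by simp [qPoch]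
  | n + 1, k + 1, h => by
    rcases Nat.lt_or_eq_of_le h with h | h
    · obtain ⟨m, rfl⟩ : ∃ m, n = k + 1 + m := ⟨n - (k + 1), by omega⟩
      have hk := eval_gaussBinom_mul_qPoch q (n := k + 1 + m) (k := k) (by omega)
      have hk1 := eval_gaussBinom_mul_qPoch q (n := k + 1 + m) (k := k + 1) (by omega)
      rw [show k + 1 + m - k = m + 1 by omega] at hk
      rw [show k + 1 + m - (k + 1) = m by omega] at hk1
      rw [show k + 1 + m + 1 - (k + 1) = m + 1 by omega, gaussBinom_succ_succ, eval_add,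
        eval_mul, eval_pow, eval_X]
      simp only [qPoch, prod_range_succ] at hk hk1 ⊢
      -- `1 - q ^ (k + m + 2) = (1 - q ^ (k + 1)) + q ^ (k + 1) * (1 - q ^ (m + 1))`
      linear_combination (1 - q * q ^ k) * hk + q ^ (k + 1) * (1 - q * q ^ m) * hk1
    · obtain rfl : k = n := by omega
      simp [qPoch]

lemma qPoch_self_ne_zero {q : ℝ} (hq : |q| < 1) (n : ℕ) : qPoch q q n ≠ 0 := by
  refine prod_ne_zero_iff.mpr fun j _ => sub_ne_zero.mpr (ne_of_gt ?_)
  rw [← pow_succ']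
  refine (le_abs_self _).trans_lt ?_
  rw [abs_pow]
  exact pow_lt_one₀ (abs_nonneg q) hq j.succ_ne_zero

lemma qBinom_eq_eval_gaussBinom {q : ℝ} (hq : |q| < 1) {n k : ℕ} (hk : k ≤ n) :
    qBinom q n k = (gaussBinom ℝ n k).eval q := by
  rw [qBinom, ← eval_gaussBinom_mul_qPoch q hk,
    mul_div_cancel_right₀ _ (mul_ne_zero (qPoch_self_ne_zero hq k) (qPoch_self_ne_zero hq _))]

noncomputable def qPochPoly {R : Type*} [CommRing R] (a : R[X]) (n : ℕ) : R[X] :=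
  ∏ j ∈ range n, (1 - a * X ^ j)

lemma natDegree_qPochPoly_le {R : Type*} [CommRing R] {a : R[X]} {d : ℕ} (ha : a.natDegree ≤ d)
    (n : ℕ) : (qPochPoly a n).natDegree ≤ n * d + n.choose 2 := by
  have hfactor (j : ℕ) : (1 - a * X ^ j).natDegree ≤ d + j :=
    (natDegree_sub_le _ _).trans <| max_le (natDegree_one.trans_le (Nat.zero_le _))
      (natDegree_mul_le_of_le ha (natDegree_X_pow_le j))
  calc (qPochPoly a n).natDegree ≤ ∑ j ∈ range n, (d + j) :=
        (natDegree_prod_le _ _).trans (sum_le_sum fun j _ => hfactor j)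
    _ = n * d + n.choose 2 := by
        rw [sum_add_distrib, sum_const, card_range, smul_eq_mul, sum_range_id, Nat.choose_two_right]

lemma eval_map_qPochPoly {R : Type*} [CommRing R] (f : R →+* ℝ) (a : R[X]) (n : ℕ) (q : ℝ) :
    ((qPochPoly a n).map f).eval q = qPoch q ((a.map f).eval q) n := by
  simp [qPochPoly, qPoch, Polynomial.map_prod, eval_prod]

/-- `(t)_K B_n(q^K t)` in `ℤ[t][q]`: the outer variable `X` is `q` and `C X` is `t`. -/
noncomputable def padeBPoly (n K : ℕ) : ℤ[X][X] :=
  qPochPoly (C X) K * ∑ k ∈ range (n + 1),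
    gaussBinom ℤ[X] n k * X ^ k.choose 2 * qPochPoly (X ^ (n + 1)) (n - k) *
      (-(X ^ K * C X : ℤ[X][X])) ^ k

lemma evalTQ_padeBPoly (n K : ℕ) {q : ℝ} (hq : |q| < 1) (t : ℝ) :
    evalTQ (padeBPoly n K) q t = qPoch q t K * padeB q n (q ^ K * t) := by
  rw [evalTQ, padeBPoly, Polynomial.map_mul, eval_mul, eval_map_qPochPoly, Polynomial.map_sum,
    eval_finsetSum, padeB]
  congr 1
  · simp
  · refine sum_congr rfl fun k hk => ?_
    rw [qBinom_eq_eval_gaussBinom hq (mem_range_succ_iff.mp hk), ← Nat.choose_two_right]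
    simp [eval_map_qPochPoly, map_gaussBinom, mul_comm t]

lemma add_choose_two (k m : ℕ) : (k + m).choose 2 = k.choose 2 + m.choose 2 + k * m := by
  qify [Nat.cast_choose_two]
  ring

lemma padeB_summand_degree_bound {n k : ℕ} (hk : k ≤ n) (K : ℕ) :
    k * (n - k) + k.choose 2 + ((n - k) * (n + 1) + (n - k).choose 2) + k * K ≤
      n.choose 2 + if K ≤ n then n ^ 2 + n else n * K := by
  obtain ⟨m, rfl⟩ : ∃ m, n = k + m := ⟨n - k, by omega⟩
  rw [Nat.add_sub_cancel_left, add_choose_two]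
  split_ifs with hK
  · nlinarith [Nat.mul_le_mul_left k hK]
  · nlinarith [Nat.mul_le_mul_left m (show k + m + 1 ≤ K by omega)]

lemma natDegree_padeBPoly_le (n K : ℕ) :
    (padeBPoly n K).natDegree ≤
      K.choose 2 + (n.choose 2 + if K ≤ n then n ^ 2 + n else n * K) := by
  have hqt : (C X : ℤ[X][X]).natDegree ≤ 0 := (natDegree_C _).le
  have hqKt : (-(X ^ K * C X : ℤ[X][X])).natDegree ≤ K + 0 :=
    natDegree_neg (X ^ K * C X : ℤ[X][X]) ▸ natDegree_mul_le_of_le (natDegree_X_pow_le K) hqt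
  refine natDegree_mul_le_of_le ?_ (natDegree_sum_le_of_forall_le _ _ fun k hk => ?_)
  · simpa using natDegree_qPochPoly_le hqt K
  · have hterm := natDegree_mul_le_of_le (natDegree_mul_le_of_le (natDegree_mul_le_of_le
      (natDegree_gaussBinom_le ℤ[X] n k) (natDegree_X_pow_le (k.choose 2)))
      (natDegree_qPochPoly_le (natDegree_X_pow_le (n + 1)) (n - k)))
      (natDegree_pow_le_of_le k hqKt)
    rw [add_zero] at hterm
    exact hterm.trans (padeB_summand_degree_bound (mem_range_succ_iff.mp hk) K)

lemma eq_of_evalTQ_eq {P Q : ℤ[X][X]} {s : Set ℝ} (hs : s.Infinite)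
    (h : ∀ q ∈ s, ∀ t, evalTQ P q t = evalTQ Q q t) : P = Q := by
  have hmap (t : ℝ) : P.map (eval₂RingHom (Int.castRingHom ℝ) t) =
      Q.map (eval₂RingHom (Int.castRingHom ℝ) t) :=
    eq_of_infinite_eval_eq _ _ (hs.mono fun q hq => h q hq t)
  refine Polynomial.ext fun i => map_injective _ (Int.castRingHom ℝ).injective_int <|
    funext fun t => ?_
  simpa [eval_map] using congrArg (coeff · i) (hmap t)

lemma choose_two_eq_sq_sub_div_two (n : ℕ) : n.choose 2 = (n ^ 2 - n) / 2 := by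
  rw [Nat.choose_two_right, sq, Nat.mul_sub_one]

/-- `deg_q ((t)_K B_n(q^K t)) ≤ (K²-K)/2 + (3n²+n)/2` for `K ≤ n` and
`≤ (K²-K)/2 + (n²-n)/2 + nK` for `K > n`. -/
theorem padeB_q_degree_bound (n K : ℕ) (P : Polynomial (Polynomial ℤ))
    (hP : ∀ q t : ℝ, 0 < |q| → |q| < 1 →
      evalTQ P q t = qPoch q t K * padeB q n (q ^ K * t)) :
    P.natDegree ≤ if K ≤ n then (K ^ 2 - K) / 2 + (3 * n ^ 2 + n) / 2
      else (K ^ 2 - K) / 2 + (n ^ 2 - n) / 2 + n * K := by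
  obtain rfl : P = padeBPoly n K := eq_of_evalTQ_eq (Set.Ioo_infinite zero_lt_one)
    fun q ⟨hq0, hq1⟩ t => by
      have hq : |q| < 1 := by rwa [abs_of_pos hq0]
      rw [hP q t (abs_pos.mpr hq0.ne') hq, evalTQ_padeBPoly n K hq]
  refine (natDegree_padeBPoly_le n K).trans (le_of_eq ?_)
  have := Nat.le_self_pow two_ne_zero n
  split_ifs <;> rw [choose_two_eq_sq_sub_div_two, choose_two_eq_sq_sub_div_two] <;> omega
end

section
/- Polynomial-term estimate: for q = 1/d with |d| ≥ 2 integer and 0 < |t| < 1, max(|A_n(q^K t)|, |(t)_K B_n(q^K t)|) ≤ 8 · max(1, (t)_K) for all n, K ∈ ℤ_+. -/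
/-! The coefficient of `t ^ k` in `A_n` and `B_n` is `[n, k]_q (q^{n+1})_{n-k}`, which equals
`(q)_{2n-k} / ((q)_k (q)_{n-k})`, times a power of `q` of modulus at most `1`. For `0 ≤ q ≤ 1/2`
this is at most `1 / (q)_{n-k} ≤ 4` because `(q)_{2n-k} ≤ (q)_k`; for `-1/2 ≤ q ≤ 0` the
denominator is at least `1` and `|(q)_{2n-k}| ≤ exp (∑ |q|^{j+1}) ≤ e < 4`. Since
`|q^K t| ≤ |q| ≤ 1/2`, both polynomials are then bounded by `4 ∑ 2^{-k} ≤ 8`, and `(t)_K > 0`. -/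

open Finset

theorem Finset.one_sub_sum_le_prod_one_sub {ι R : Type*} [CommRing R] [LinearOrder R]
    [IsStrictOrderedRing R] (s : Finset ι) {f : ι → R} (h0 : ∀ i ∈ s, 0 ≤ f i)
    (h1 : ∀ i ∈ s, f i ≤ 1) : 1 - ∑ i ∈ s, f i ≤ ∏ i ∈ s, (1 - f i) := by
  classical
  induction s using Finset.induction_on with
  | empty => simp
  | insert i s hi ih =>
    rw [sum_insert hi, prod_insert hi]
    have hfi0 := h0 i (mem_insert_self i s)
    have hfi1 := h1 i (mem_insert_self i s)
    have hprod := ih (fun j hj => h0 j (mem_insert_of_mem hj))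
      fun j hj => h1 j (mem_insert_of_mem hj)
    have hsum : 0 ≤ ∑ j ∈ s, f j := sum_nonneg fun j hj => h0 j (mem_insert_of_mem hj)
    nlinarith [mul_le_mul_of_nonneg_left hprod (sub_nonneg.2 hfi1)]

theorem qPoch_add (q a : ℝ) (m l : ℕ) :
    qPoch q a (m + l) = qPoch q a m * qPoch q (a * q ^ m) l := by
  simp only [qPoch, prod_range_add]
  exact congrArg _ (prod_congr rfl fun j _ => by ring)

theorem qBinom_mul_qPoch {q : ℝ} {n k : ℕ} (hk : k ≤ n) :
    qBinom q n k * qPoch q (q ^ (n + 1)) (n - k) =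
      qPoch q q (2 * n - k) / (qPoch q q k * qPoch q q (n - k)) := by
  rw [show 2 * n - k = n + (n - k) by omega, qPoch_add, ← pow_succ', qBinom]
  ring

theorem qPoch_pos {q a : ℝ} (hq : |q| ≤ 1) (ha : |a| < 1) (m : ℕ) : 0 < qPoch q a m :=
  prod_pos fun j _ => by
    have : |a * q ^ j| < 1 := by
      rw [abs_mul, abs_pow]
      exact mul_lt_one_of_nonneg_of_lt_one_left (abs_nonneg a) ha (pow_le_one₀ (abs_nonneg q) hq)
    linarith [le_abs_self (a * q ^ j)]

theorem abs_qPoch_le_exp (q a : ℝ) (m : ℕ) :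
    |qPoch q a m| ≤ Real.exp (∑ j ∈ range m, |a * q ^ j|) := by
  rw [qPoch, abs_prod]
  refine (prod_le_prod (fun j _ => abs_nonneg _) fun j _ => ?_).trans
    (Real.prod_one_add_le_exp_sum _ fun j => abs_nonneg _)
  simpa using abs_sub (1 : ℝ) (a * q ^ j)

theorem abs_qPoch_self_le_exp_one {q : ℝ} (hq : |q| ≤ 1 / 2) (m : ℕ) :
    |qPoch q q m| ≤ Real.exp 1 := by
  refine (abs_qPoch_le_exp q q m).trans (Real.exp_le_exp.2 ?_)
  calc ∑ j ∈ range m, |q * q ^ j| ≤ ∑ j ∈ range m, 1 / 2 * (1 / 2 : ℝ) ^ j := by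
        gcongr with j
        rw [abs_mul, abs_pow]
        exact mul_le_mul hq (pow_le_pow_left₀ (abs_nonneg q) hq j) (by positivity) (by norm_num)
    _ = 1 / 2 * ∑ j ∈ range m, (1 / 2 : ℝ) ^ j := (mul_sum ..).symm
    _ ≤ 1 := by linarith [sum_geometric_two_le m]

theorem abs_qPoch_le_one {q a : ℝ} (hq0 : 0 ≤ q) (hq1 : q ≤ 1) (ha0 : 0 ≤ a) (ha1 : a ≤ 1)
    (m : ℕ) : |qPoch q a m| ≤ 1 := by
  rw [qPoch, abs_prod]
  refine prod_le_one (fun j _ => abs_nonneg _) fun j _ => abs_le.2 ⟨?_, ?_⟩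
  · nlinarith [mul_le_one₀ ha1 (pow_nonneg hq0 j) (pow_le_one₀ hq0 hq1)]
  · nlinarith [mul_nonneg ha0 (pow_nonneg hq0 j)]

theorem one_quarter_le_qPoch_self {q : ℝ} (hq0 : 0 ≤ q) (hq : q ≤ 1 / 2) (m : ℕ) :
    1 / 4 ≤ qPoch q q m := by
  cases m with
  | zero => norm_num [qPoch]
  | succ m =>
    -- `(q)_{m+1} = (1 - q) ∏ (1 - q^{j+2}) ≥ (1 - q) (1 - q² / (1 - q)) = 1 - q - q²`
    rw [qPoch, prod_range_succ', pow_zero, mul_one]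
    have hgeom : (∑ j ∈ range m, q ^ j) * (1 - q) ≤ 1 := by
      rw [geom_sum_mul_of_le_one (by linarith)]
      linarith [pow_nonneg hq0 m]
    have hsum : ∑ j ∈ range m, q * q ^ (j + 1) = q ^ 2 * ∑ j ∈ range m, q ^ j := by
      rw [mul_sum]; exact sum_congr rfl fun j _ => by ring
    have hweier := one_sub_sum_le_prod_one_sub (range m) (f := fun j => q * q ^ (j + 1))
      (fun j _ => by positivity)
      fun j _ => mul_le_one₀ (by linarith) (by positivity) (pow_le_one₀ hq0 (by linarith))
    rw [hsum] at hweier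
    nlinarith [mul_le_mul_of_nonneg_right hweier (by linarith : 0 ≤ 1 - q)]

theorem one_le_qPoch_self {q : ℝ} (hq : -(1 / 2) ≤ q) (hq0 : q ≤ 0) (m : ℕ) :
    1 ≤ qPoch q q m := by
  have hpair : ∀ i : ℕ, 1 ≤ (1 - q * q ^ (2 * i)) * (1 - q * q ^ (2 * i + 1)) := fun i => by
    have hu0 : 0 ≤ q ^ (2 * i) := (even_two_mul i).pow_nonneg q
    have hu1 : q ^ (2 * i) ≤ 1 := by
      rw [pow_mul]; exact pow_le_one₀ (sq_nonneg q) (by nlinarith)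
    rw [pow_succ]
    nlinarith [mul_nonneg (mul_nonneg (neg_nonneg.2 hq0) hu0)
      (by nlinarith : 0 ≤ 1 + q - q ^ 2 * q ^ (2 * i))]
  have heven : ∀ i : ℕ, 1 ≤ qPoch q q (2 * i) := fun i => by
    induction i with
    | zero => simp [qPoch]
    | succ i ih =>
      rw [show 2 * (i + 1) = 2 * i + 1 + 1 by ring, qPoch, prod_range_succ, prod_range_succ,
        mul_assoc]
      exact one_le_mul_of_one_le_of_one_le ih (hpair i)
  obtain ⟨i, rfl | rfl⟩ := Nat.even_or_odd' m
  · exact heven i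
  · rw [qPoch, prod_range_succ]
    exact one_le_mul_of_one_le_of_one_le (heven i)
      (by nlinarith [mul_nonpos_of_nonpos_of_nonneg hq0 ((even_two_mul i).pow_nonneg q)])

theorem abs_qBinom_mul_qPoch_le_four {q : ℝ} (hq : |q| ≤ 1 / 2) {n k : ℕ} (hk : k ≤ n) :
    |qBinom q n k * qPoch q (q ^ (n + 1)) (n - k)| ≤ 4 := by
  rw [qBinom_mul_qPoch hk]
  rcases le_total 0 q with hq0 | hq0
  · have hq1 : q ≤ 1 / 2 := (le_abs_self q).trans hq
    have hk0 := one_quarter_le_qPoch_self hq0 hq1 k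
    have hnk := one_quarter_le_qPoch_self hq0 hq1 (n - k)
    have htail : |qPoch q (q * q ^ k) (2 * (n - k))| ≤ 1 :=
      abs_qPoch_le_one hq0 (by linarith) (by positivity)
        (mul_le_one₀ (by linarith) (by positivity) (pow_le_one₀ hq0 (by linarith))) _
    rw [show 2 * n - k = k + (2 * (n - k)) by omega, qPoch_add, mul_div_mul_left _ _ (by linarith),
      abs_div, abs_of_pos (by linarith : 0 < qPoch q q (n - k)), div_le_iff₀ (by linarith)]
    linarith
  · have hq1 : -(1 / 2) ≤ q := neg_le_of_abs_le hq
    have hden : 1 ≤ qPoch q q k * qPoch q q (n - k) :=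
      one_le_mul_of_one_le_of_one_le (one_le_qPoch_self hq1 hq0 k) (one_le_qPoch_self hq1 hq0 _)
    rw [abs_div, abs_of_pos (by linarith : 0 < qPoch q q k * qPoch q q (n - k))]
    calc |qPoch q q (2 * n - k)| / (qPoch q q k * qPoch q q (n - k))
        ≤ |qPoch q q (2 * n - k)| := div_le_self (abs_nonneg _) hden
      _ ≤ Real.exp 1 := abs_qPoch_self_le_exp_one hq _
      _ ≤ 4 := by linarith [Real.exp_one_lt_d9]

theorem abs_sum_qBinom_mul_qPoch_le_eight {q s : ℝ} (hq : |q| ≤ 1 / 2) (hs : |s| ≤ 1 / 2)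
    (n : ℕ) {w : ℕ → ℝ} (hw : ∀ k, |w k| ≤ 1) :
    |∑ k ∈ range (n + 1), qBinom q n k * w k * qPoch q (q ^ (n + 1)) (n - k) * s ^ k| ≤ 8 := by
  have hterm : ∀ k ∈ range (n + 1),
      |qBinom q n k * w k * qPoch q (q ^ (n + 1)) (n - k) * s ^ k| ≤ 4 * (1 / 2) ^ k := by
    intro k hk
    rw [mul_right_comm _ (w k), abs_mul, abs_mul, abs_pow]
    have hcoeff := abs_qBinom_mul_qPoch_le_four hq (Nat.lt_succ_iff.1 (mem_range.1 hk))
    have hpow : |s| ^ k ≤ (1 / 2) ^ k := pow_le_pow_left₀ (abs_nonneg s) hs k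
    simpa using mul_le_mul (mul_le_mul hcoeff (hw k) (abs_nonneg _) (by norm_num)) hpow
      (by positivity) (by norm_num)
  calc _ ≤ ∑ k ∈ range (n + 1), 4 * (1 / 2 : ℝ) ^ k :=
        (abs_sum_le_sum_abs _ _).trans (sum_le_sum hterm)
    _ = 4 * ∑ k ∈ range (n + 1), (1 / 2 : ℝ) ^ k := (mul_sum ..).symm
    _ ≤ 8 := by linarith [sum_geometric_two_le (n + 1)]

theorem abs_padeA_le_eight {q s : ℝ} (hq : |q| ≤ 1 / 2) (hs : |s| ≤ 1 / 2) (n : ℕ) :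
    |padeA q n s| ≤ 8 :=
  abs_sum_qBinom_mul_qPoch_le_eight hq hs n fun k => by
    rw [abs_pow]; exact pow_le_one₀ (abs_nonneg q) (by linarith)

theorem abs_padeB_le_eight {q s : ℝ} (hq : |q| ≤ 1 / 2) (hs : |s| ≤ 1 / 2) (n : ℕ) :
    |padeB q n s| ≤ 8 :=
  abs_sum_qBinom_mul_qPoch_le_eight hq (by rwa [abs_neg]) n fun k => by
    rw [abs_pow]; exact pow_le_one₀ (abs_nonneg q) (by linarith)

theorem polynomial_term_estimate_general (d : ℤ) (hd : 2 ≤ |d|) (t : ℝ)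
    (ht1 : |t| < 1) (n K : ℕ) (hK : 1 ≤ K) :
    max |padeA (1 / (d : ℝ)) n ((1 / (d : ℝ)) ^ K * t)|
        |qPoch (1 / (d : ℝ)) t K * padeB (1 / (d : ℝ)) n ((1 / (d : ℝ)) ^ K * t)| ≤
      8 * max 1 (qPoch (1 / (d : ℝ)) t K) := by
  set q : ℝ := 1 / (d : ℝ)
  have hq : |q| ≤ 1 / 2 := by
    rw [abs_div, abs_one, ← Int.cast_abs]
    exact one_div_le_one_div_of_le two_pos (by exact_mod_cast hd)
  have hs : |q ^ K * t| ≤ 1 / 2 := by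
    rw [abs_mul, abs_pow]
    calc |q| ^ K * |t| ≤ |q| * 1 :=
          mul_le_mul (pow_le_of_le_one (abs_nonneg q) (by linarith) (by omega)) ht1.le
            (abs_nonneg t) (abs_nonneg q)
      _ ≤ 1 / 2 := by linarith
  have hpoch : 0 < qPoch q t K := qPoch_pos (by linarith) ht1 K
  rw [abs_mul, abs_of_pos hpoch]
  refine max_le ?_ ?_
  · calc |padeA q n (q ^ K * t)| ≤ 8 := abs_padeA_le_eight hq hs n
      _ ≤ 8 * max 1 (qPoch q t K) := le_mul_of_one_le_right (by norm_num) (le_max_left _ _)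
  · calc qPoch q t K * |padeB q n (q ^ K * t)| ≤ qPoch q t K * 8 :=
          mul_le_mul_of_nonneg_left (abs_padeB_le_eight hq hs n) hpoch.le
      _ ≤ 8 * max 1 (qPoch q t K) := by rw [mul_comm]; gcongr; exact le_max_right _ _

/-- polynomial-term estimate
`max(|A_n(q^K t)|, |(t)_K B_n(q^K t)|) ≤ 8 max(1, (t)_K)`. -/
theorem polynomial_term_estimate (d : ℤ) (hd : 2 ≤ |d|) (t : ℝ) (ht0 : 0 < |t|)
    (ht1 : |t| < 1) (n K : ℕ) (hn : 1 ≤ n) (hK : 1 ≤ K) :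
    max |padeA (1 / (d : ℝ)) n ((1 / (d : ℝ)) ^ K * t)|
        |qPoch (1 / (d : ℝ)) t K * padeB (1 / (d : ℝ)) n ((1 / (d : ℝ)) ^ K * t)| ≤
      8 * max 1 (qPoch (1 / (d : ℝ)) t K) :=
  polynomial_term_estimate_general d hd t ht1 n K hK
end

section
/- General irrationality-measure lemma: Let Φ ∈ ℝ and suppose there are rationals q_n, p_n with q_n Φ − p_n = r_n for n ≥ n₀, satisfying (i) q_n p_{n+1} − p_n q_{n+1} ≠ 0, (ii) |q_n|, |p_n| ≤ e^{a n^2 + a₁ n + a₂}, (iii) |r_n| ≤ e^{−b n^2 + b₁ n + b₂} < 1, with a, b > 0 and a₁, a₂, b₁, b₂ ≥ 0. Set c₁ = (b₁ + √(b₁² + 4bb₂))/(2b), c₂ = 2ac₁ + 4a + a₁, c₃ = c₁(ac₁ + 4a + a₁) + 4a + 2a₁ + a₂. If M, N ∈ ℤ with |N| ≥ e^{b n₀² − b₁ n₀ − b₂}/2 and there is a largest n̄ ≥ n₀ with 2|N| e^{−b n̄² + b₁ n̄ + b₂} ≥ 1 such that N p_n − M q_n ∈ ℤ for n = n̄+1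 and n = n̄+2, then |Φ − M/N| > e^{−c₃} (2|N|)^{−(1 + a/b + c₂/√(b log(2|N|)))}. -/
/-!
Among the two consecutive linear forms `N pₙ - M qₙ` (`n = n̄+1, n̄+2`) one is nonzero, since
otherwise the determinant condition fails; being an integer, it has absolute value at least `1`.
Writing it as `qₙ N (Φ - M/N) - N rₙ` and using `2|N||rₙ| < 1` (maximality of `n̄`) gives
`2|N||qₙ||Φ - M/N| > 1`. The inequality `2|N| e^{-b n̄² + b₁ n̄ + b₂} ≥ 1` bounds `n̄` by
`c₁ + √(log(2|N|)/b)`, with `c₁` the positive root of `b x² - b₁ x - b₂`, and inserting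
`n ≤ n̄ + 2` into the bound `|qₙ| ≤ e^{a n² + a₁ n + a₂}` produces the exponent.
-/

open Real

lemma linear_form_ne_zero_or_of_det_ne_zero {K : Type*} [Field K] {N M p q p' q' : K}
    (hN : N ≠ 0) (hdet : q * p' - p * q' ≠ 0) :
    N * p - M * q ≠ 0 ∨ N * p' - M * q' ≠ 0 := by
  by_contra! h
  apply hdet
  have hNdet : N * (q * p' - p * q') = 0 := by
    linear_combination q * h.2 - q' * h.1
  exact (mul_eq_zero.mp hNdet).resolve_left hN

lemma exists_one_le_abs_linear_form {N M : ℤ} {p q : ℕ → ℚ} {k : ℕ} (hN : N ≠ 0)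
    (hdet : q k * p (k + 1) - p k * q (k + 1) ≠ 0)
    (hint : ∀ m : ℕ, m = k ∨ m = k + 1 → ∃ z : ℤ, (z : ℚ) = (N : ℚ) * p m - (M : ℚ) * q m) :
    ∃ m : ℕ, (m = k ∨ m = k + 1) ∧ 1 ≤ |(N : ℝ) * (p m : ℝ) - (M : ℝ) * (q m : ℝ)| := by
  have hNQ : (N : ℚ) ≠ 0 := by exact_mod_cast hN
  have key : ∀ m : ℕ, m = k ∨ m = k + 1 → (N : ℚ) * p m - (M : ℚ) * q m ≠ 0 →
      1 ≤ |(N : ℝ) * (p m : ℝ) - (M : ℝ) * (q m : ℝ)| := by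
    intro m hm hne
    obtain ⟨z, hz⟩ := hint m hm
    have hzR : (z : ℝ) = (N : ℝ) * (p m : ℝ) - (M : ℝ) * (q m : ℝ) := by
      exact_mod_cast congrArg (fun x : ℚ => (x : ℝ)) hz
    rw [← hzR]
    exact_mod_cast Int.one_le_abs (by rintro rfl; exact hne (by simpa using hz.symm))
  rcases linear_form_ne_zero_or_of_det_ne_zero (M := (M : ℚ)) hNQ hdet with h | h
  · exact ⟨k, .inl rfl, key k (.inl rfl) h⟩
  · exact ⟨k + 1, .inr rfl, key (k + 1) (.inr rfl) h⟩

lemma one_lt_two_mul_abs_mul_abs_sub_div {Φ P Q r N M : ℝ} (hN : N ≠ 0)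
    (hform : Q * Φ - P = r) (hz : 1 ≤ |N * P - M * Q|) (hr : 2 * |N| * |r| < 1) :
    1 < 2 * |N| * |Q| * |Φ - M / N| := by
  have hsplit : N * P - M * Q = Q * N * (Φ - M / N) - N * r := by
    rw [← hform]; field_simp; ring
  have htri : |N * P - M * Q| ≤ |N| * |Q| * |Φ - M / N| + |N| * |r| := by
    rw [hsplit]
    calc |Q * N * (Φ - M / N) - N * r| ≤ |Q * N * (Φ - M / N)| + |N * r| := abs_sub _ _
      _ = |N| * |Q| * |Φ - M / N| + |N| * |r| := by simp only [abs_mul]; ring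
  linarith

lemma le_quadratic_root_add_sqrt {b b₁ b₂ L x : ℝ} (hb : 0 < b)
    (hdisc : 0 ≤ b₁ ^ 2 + 4 * b * b₂) (hL : 0 ≤ L) (hx : b * x ^ 2 - b₁ * x - b₂ ≤ L) :
    x ≤ (b₁ + √(b₁ ^ 2 + 4 * b * b₂)) / (2 * b) + √(L / b) := by
  set R := √(b₁ ^ 2 + 4 * b * b₂)
  set c := (b₁ + R) / (2 * b)
  set s := √(L / b)
  have hR2 : R ^ 2 = b₁ ^ 2 + 4 * b * b₂ := sq_sqrt hdisc
  have hc : 2 * b * c = b₁ + R := by simp only [c]; field_simp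
  have hroot : 4 * b * (b * c ^ 2 - b₁ * c - b₂) = 0 := by
    linear_combination (2 * b * c - b₁ + R) * hc + hR2
  have hs : b * s ^ 2 = L := by rw [sq_sqrt (by positivity)]; field_simp
  by_contra! hlt
  have hy : s < x - c := by linarith
  have hys : b * s ^ 2 < b * (x - c) ^ 2 :=
    mul_lt_mul_of_pos_left (pow_lt_pow_left₀ hy (sqrt_nonneg _) two_ne_zero) hb
  have hlin : 0 ≤ R * (x - c) := mul_nonneg (sqrt_nonneg _) (by linarith [sqrt_nonneg (L / b)])
  have hexpand : 4 * b * (b * x ^ 2 - b₁ * x - b₂) =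
      4 * b * (b * (x - c) ^ 2 + R * (x - c)) := by
    linear_combination hroot + 4 * b * (x - c) * hc
  have := mul_left_cancel₀ (by positivity) hexpand
  linarith

lemma quadratic_le_of_le_add_sqrt_add_two {a a₁ a₂ b c L x : ℝ} (ha : 0 ≤ a) (ha₁ : 0 ≤ a₁)
    (hb : 0 < b) (hL : 0 ≤ L) (hx₀ : 0 ≤ x) (hx : x ≤ c + √(L / b) + 2) :
    a * x ^ 2 + a₁ * x + a₂ ≤
      c * (a * c + 4 * a + a₁) + 4 * a + 2 * a₁ + a₂ + a / b * L +
        (2 * a * c + 4 * a + a₁) * √(L / b) := by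
  have hs : √(L / b) ^ 2 = L / b := sq_sqrt (by positivity)
  have hsq : x ^ 2 ≤ (c + √(L / b) + 2) ^ 2 := pow_le_pow_left₀ hx₀ hx 2
  have hid : a * (c + √(L / b) + 2) ^ 2 + a₁ * (c + √(L / b) + 2) + a₂ =
      c * (a * c + 4 * a + a₁) + 4 * a + 2 * a₁ + a₂ + a / b * L +
        (2 * a * c + 4 * a + a₁) * √(L / b) := by
    linear_combination a * hs
  linarith [mul_le_mul_of_nonneg_left hsq ha, mul_le_mul_of_nonneg_left hx ha₁]

lemma div_sqrt_mul_mul_eq_mul_sqrt_div {b : ℝ} (hb : 0 < b) (c L : ℝ) :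
    c / √(b * L) * L = c * √(L / b) := by
  rcases le_or_gt L 0 with hL | hL
  · rw [sqrt_eq_zero'.mpr (mul_nonpos_of_nonneg_of_nonpos hb.le hL),
      sqrt_eq_zero'.mpr (div_nonpos_of_nonpos_of_nonneg hL hb.le)]
    simp
  · have hprod : √(b * L) * √(L / b) = L := by
      rw [← sqrt_mul (by positivity), show b * L * (L / b) = L ^ 2 by field_simp]
      exact sqrt_sq hL.le
    have hpos : 0 < √(b * L) := sqrt_pos.mpr (by positivity)
    rw [div_mul_eq_mul_div, div_eq_iff hpos.ne', mul_assoc, mul_comm (√(L / b)), hprod]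

lemma exp_neg_mul_rpow_neg_eq_inv {T b : ℝ} (hT : 0 < T) (hb : 0 < b) (c₂ c₃ α : ℝ) :
    exp (-c₃) * T ^ (-(1 + α + c₂ / √(b * log T))) =
      (T * exp (c₃ + α * log T + c₂ * √(log T / b)))⁻¹ := by
  rw [rpow_def_of_pos hT, ← exp_add, ← exp_log hT, ← exp_add, ← exp_neg, log_exp]
  congr 1
  linear_combination -div_sqrt_mul_mul_eq_mul_sqrt_div hb c₂ (log T)

theorem irrationality_measure_lemma_general
    (Φ : ℝ) (p q : ℕ → ℚ) (r : ℕ → ℝ) (n₀ : ℕ)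
    (a a₁ a₂ b b₁ b₂ : ℝ) (ha : 0 < a) (hb : 0 < b)
    (ha₁ : 0 ≤ a₁) (hb₂ : 0 ≤ b₂)
    (hform : ∀ n : ℕ, n₀ ≤ n → (q n : ℝ) * Φ - (p n : ℝ) = r n)
    (hdet : ∀ n : ℕ, n₀ ≤ n → q n * p (n + 1) - p n * q (n + 1) ≠ 0)
    (hQ : ∀ n : ℕ, n₀ ≤ n →
      |(q n : ℝ)| ≤ Real.exp (a * n ^ 2 + a₁ * n + a₂) ∧
      |(p n : ℝ)| ≤ Real.exp (a * n ^ 2 + a₁ * n + a₂))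
    (hR : ∀ n : ℕ, n₀ ≤ n →
      |r n| ≤ Real.exp (-b * n ^ 2 + b₁ * n + b₂) ∧
      Real.exp (-b * n ^ 2 + b₁ * n + b₂) < 1)
    (c₁ c₂ c₃ : ℝ)
    (hc₁ : c₁ = (b₁ + Real.sqrt (b₁ ^ 2 + 4 * b * b₂)) / (2 * b))
    (hc₂ : c₂ = 2 * a * c₁ + 4 * a + a₁)
    (hc₃ : c₃ = c₁ * (a * c₁ + 4 * a + a₁) + 4 * a + 2 * a₁ + a₂)
    (M N : ℤ)
    (nb : ℕ) (hnb : n₀ ≤ nb)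
    (hnbR : 1 ≤ 2 * |(N : ℝ)| * Real.exp (-b * nb ^ 2 + b₁ * nb + b₂))
    (hnbmax : ∀ m : ℕ, nb < m → 2 * |(N : ℝ)| * Real.exp (-b * m ^ 2 + b₁ * m + b₂) < 1)
    (hint : ∀ m : ℕ, m = nb + 1 ∨ m = nb + 2 →
      ∃ z : ℤ, (z : ℚ) = (N : ℚ) * p m - (M : ℚ) * q m) :
    Real.exp (-c₃) *
        (2 * |(N : ℝ)|) ^
          (-(1 + a / b + c₂ / Real.sqrt (b * Real.log (2 * |(N : ℝ)|)))) <
      |Φ - (M : ℝ) / (N : ℝ)| := by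
  have hN : N ≠ 0 := by rintro rfl; simp at hnbR; linarith
  have hN1 : (1 : ℝ) ≤ |(N : ℝ)| := by exact_mod_cast Int.one_le_abs hN
  set T := 2 * |(N : ℝ)| with hT
  have hL : 0 ≤ log T := log_nonneg (by rw [hT]; linarith)
  obtain ⟨n, hn, hz⟩ := exists_one_le_abs_linear_form hN (hdet (nb + 1) (by omega)) hint
  have hnbn : nb < n ∧ n ≤ nb + 2 := by omega
  have hr : 2 * |(N : ℝ)| * |r n| < 1 :=
    lt_of_le_of_lt (by gcongr; exact (hR n (by omega)).1) (hnbmax n hnbn.1)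
  have happrox := one_lt_two_mul_abs_mul_abs_sub_div (by exact_mod_cast hN)
    (hform n (by omega)) hz hr
  have hnb_le : (nb : ℝ) ≤ c₁ + √(log T / b) := by
    rw [hc₁]
    refine le_quadratic_root_add_sqrt hb (by positivity) hL ?_
    have h := log_nonneg hnbR
    rw [log_mul (by positivity) (exp_pos _).ne', log_exp] at h
    linarith
  have hn_le : (n : ℝ) ≤ c₁ + √(log T / b) + 2 := by
    have : (n : ℝ) ≤ nb + 2 := by exact_mod_cast hnbn.2
    linarith
  have hexponent := quadratic_le_of_le_add_sqrt_add_two (a₂ := a₂) ha.le ha₁ hb hL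
    (Nat.cast_nonneg n) hn_le
  rw [← hc₂, ← hc₃] at hexponent
  have hq : |(q n : ℝ)| ≤ exp (c₃ + a / b * log T + c₂ * √(log T / b)) :=
    ((hQ n (by omega)).1).trans (exp_le_exp.mpr hexponent)
  have hqpos : 0 < T * |(q n : ℝ)| :=
    pos_of_mul_pos_left (by linarith : 0 < T * |(q n : ℝ)| * |Φ - M / N|) (abs_nonneg _)
  rw [exp_neg_mul_rpow_neg_eq_inv (by positivity) hb]
  calc (T * exp (c₃ + a / b * log T + c₂ * √(log T / b)))⁻¹ ≤ (T * |(q n : ℝ)|)⁻¹ := by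
        gcongr
    _ < |Φ - M / N| := by
        rw [inv_lt_iff_one_lt_mul₀ hqpos]; linarith

/-- the general irrationality-measure lemma. -/
theorem irrationality_measure_lemma
    (Φ : ℝ) (p q : ℕ → ℚ) (r : ℕ → ℝ) (n₀ : ℕ) (hn₀ : 1 ≤ n₀)
    (a a₁ a₂ b b₁ b₂ : ℝ) (ha : 0 < a) (hb : 0 < b)
    (ha₁ : 0 ≤ a₁) (ha₂ : 0 ≤ a₂) (hb₁ : 0 ≤ b₁) (hb₂ : 0 ≤ b₂)
    (hform : ∀ n : ℕ, n₀ ≤ n → (q n : ℝ) * Φ - (p n : ℝ) = r n)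
    (hdet : ∀ n : ℕ, n₀ ≤ n → q n * p (n + 1) - p n * q (n + 1) ≠ 0)
    (hQ : ∀ n : ℕ, n₀ ≤ n →
      |(q n : ℝ)| ≤ Real.exp (a * n ^ 2 + a₁ * n + a₂) ∧
      |(p n : ℝ)| ≤ Real.exp (a * n ^ 2 + a₁ * n + a₂))
    (hR : ∀ n : ℕ, n₀ ≤ n →
      |r n| ≤ Real.exp (-b * n ^ 2 + b₁ * n + b₂) ∧
      Real.exp (-b * n ^ 2 + b₁ * n + b₂) < 1)
    (c₁ c₂ c₃ : ℝ)
    (hc₁ : c₁ = (b₁ + Real.sqrt (b₁ ^ 2 + 4 * b * b₂)) / (2 * b))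
    (hc₂ : c₂ = 2 * a * c₁ + 4 * a + a₁)
    (hc₃ : c₃ = c₁ * (a * c₁ + 4 * a + a₁) + 4 * a + 2 * a₁ + a₂)
    (M N : ℤ)
    (hN : Real.exp (b * n₀ ^ 2 - b₁ * n₀ - b₂) / 2 ≤ |(N : ℝ)|)
    (nb : ℕ) (hnb : n₀ ≤ nb)
    (hnbR : 1 ≤ 2 * |(N : ℝ)| * Real.exp (-b * nb ^ 2 + b₁ * nb + b₂))
    (hnbmax : ∀ m : ℕ, nb < m → 2 * |(N : ℝ)| * Real.exp (-b * m ^ 2 + b₁ * m + b₂) < 1)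
    (hint : ∀ m : ℕ, m = nb + 1 ∨ m = nb + 2 →
      ∃ z : ℤ, (z : ℚ) = (N : ℚ) * p m - (M : ℚ) * q m) :
    Real.exp (-c₃) *
        (2 * |(N : ℝ)|) ^
          (-(1 + a / b + c₂ / Real.sqrt (b * Real.log (2 * |(N : ℝ)|)))) <
      |Φ - (M : ℝ) / (N : ℝ)| :=
  irrationality_measure_lemma_general Φ p q r n₀ a a₁ a₂ b b₁ b₂ ha hb ha₁ hb₂ hform hdet hQ hR c₁
    c₂ c₃ hc₁ hc₂ hc₃ M N nb hnb hnbR hnbmax hint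
end

section
/- The optimization min over γ ∈ (0, 1+√3) of a(γ)/b(γ), where a(γ)/b(γ) = (γ²+3)/(4γ−γ²) for 0 < γ ≤ 1 and a(γ)/b(γ) = (γ²+2γ+1)/(2+2γ−γ²) for 1 ≤ γ < 1+√3, is attained at γ = 1 with value 4/3; moreover the function (γ²+3)/(4γ−γ²) is decreasing on (0,1) and (γ²+2γ+1)/(2+2γ−γ²) is increasing on [1, 1+√3). -/
/-!
Both pieces exceed `4/3` by a factorable quadratic: after clearing the (positive) denominators,
`3(γ² + 3) - 4(4γ - γ²) = (γ - 1)(7γ - 9)` and `3(γ + 1)² - 4(2 + 2γ - γ²) = (γ - 1)(7γ + 5)`,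
which are nonnegative for `γ ≤ 1` and `γ ≥ 1` respectively. Monotonicity likewise comes from
factoring the cross-multiplied difference `p(x)q(y) - p(y)q(x)` of numerator `p` and denominator `q`.
-/

open Real Set

namespace GammaOptimization

noncomputable def ratioLow (γ : ℝ) : ℝ := (γ ^ 2 + 3) / (4 * γ - γ ^ 2)

noncomputable def ratioHigh (γ : ℝ) : ℝ := (γ ^ 2 + 2 * γ + 1) / (2 + 2 * γ - γ ^ 2)

lemma ratioLow_denom_pos {γ : ℝ} (h₀ : 0 < γ) (h₄ : γ < 4) : 0 < 4 * γ - γ ^ 2 := by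
  nlinarith

lemma ratioHigh_denom_pos {γ : ℝ} (h₀ : 1 - √3 < γ) (h₁ : γ < 1 + √3) :
    0 < 2 + 2 * γ - γ ^ 2 := by
  have hsq : √3 ^ 2 = 3 := sq_sqrt (by norm_num)
  have hdiff : 2 + 2 * γ - γ ^ 2 = (1 + √3 - γ) * (γ - (1 - √3)) := by linear_combination -hsq
  rw [hdiff]
  exact mul_pos (by linarith) (by linarith)

lemma four_thirds_le_ratioLow {γ : ℝ} (h₀ : 0 < γ) (h₁ : γ ≤ 1) : 4 / 3 ≤ ratioLow γ := by
  rw [ratioLow, le_div_iff₀ (ratioLow_denom_pos h₀ (by linarith))]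
  nlinarith [mul_nonneg_of_nonpos_of_nonpos (sub_nonpos.2 h₁) (by linarith : 7 * γ - 9 ≤ 0)]

lemma four_thirds_le_ratioHigh {γ : ℝ} (h₁ : 1 ≤ γ) (h₂ : γ < 1 + √3) :
    4 / 3 ≤ ratioHigh γ := by
  have hden := ratioHigh_denom_pos (by linarith [sqrt_nonneg 3]) h₂
  rw [ratioHigh, le_div_iff₀ hden]
  nlinarith [mul_nonneg (sub_nonneg.2 h₁) (by linarith : 0 ≤ 7 * γ + 5)]

lemma strictAntiOn_ratioLow : StrictAntiOn ratioLow (Ioc 0 1) := by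
  rintro x ⟨hx₀, hx₁⟩ y ⟨hy₀, hy₁⟩ hxy
  rw [ratioLow, ratioLow, div_lt_div_iff₀ (ratioLow_denom_pos hy₀ (by linarith))
    (ratioLow_denom_pos hx₀ (by linarith))]
  have hcross : (x ^ 2 + 3) * (4 * y - y ^ 2) - (y ^ 2 + 3) * (4 * x - x ^ 2)
      = (y - x) * (12 - 3 * (x + y) - 4 * x * y) := by ring
  have hxy₁ : x * y ≤ 1 := by nlinarith
  nlinarith [mul_pos (sub_pos.2 hxy) (by linarith : 0 < 12 - 3 * (x + y) - 4 * x * y)]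

lemma strictMonoOn_ratioHigh : StrictMonoOn ratioHigh (Ico 0 (1 + √3)) := by
  have hlow : 1 - √3 < 0 := by
    have : (1 : ℝ) < √3 := by rw [lt_sqrt zero_le_one]; norm_num
    linarith
  rintro x ⟨hx₀, hx₁⟩ y ⟨hy₀, hy₁⟩ hxy
  rw [ratioHigh, ratioHigh, div_lt_div_iff₀ (ratioHigh_denom_pos (by linarith) hx₁)
    (ratioHigh_denom_pos (by linarith) hy₁)]
  -- with `u = x + 1`, `v = y + 1` the denominator is `4u - u² - 1`
  have hcross : (y ^ 2 + 2 * y + 1) * (2 + 2 * x - x ^ 2) - (x ^ 2 + 2 * x + 1) * (2 + 2 * y - y ^ 2)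
      = (y - x) * (4 * (x + 1) * (y + 1) - (x + 1) - (y + 1)) := by ring
  nlinarith [mul_pos (sub_pos.2 hxy) (by nlinarith : 0 < 4 * (x + 1) * (y + 1) - (x + 1) - (y + 1))]

end GammaOptimization

open GammaOptimization in
/-- the minimum of `a(γ)/b(γ)` over `γ ∈ (0, 1+√3)` is `4/3`,
attained at `γ = 1`; the first piece is decreasing on `(0,1)` and the second is
increasing on `[1, 1+√3)`. -/
theorem gamma_optimization :
    (∀ γ : ℝ, 0 < γ → γ < 1 + Real.sqrt 3 →
      (4 : ℝ) / 3 ≤ (if γ ≤ 1 then (γ ^ 2 + 3) / (4 * γ - γ ^ 2)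
        else (γ ^ 2 + 2 * γ + 1) / (2 + 2 * γ - γ ^ 2))) ∧
    ((1 : ℝ) ^ 2 + 3) / (4 * 1 - (1 : ℝ) ^ 2) = 4 / 3 ∧
    ((1 : ℝ) ^ 2 + 2 * 1 + 1) / (2 + 2 * 1 - (1 : ℝ) ^ 2) = 4 / 3 ∧
    StrictAntiOn (fun γ : ℝ => (γ ^ 2 + 3) / (4 * γ - γ ^ 2)) (Set.Ioo 0 1) ∧
    StrictMonoOn (fun γ : ℝ => (γ ^ 2 + 2 * γ + 1) / (2 + 2 * γ - γ ^ 2))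
      (Set.Ico 1 (1 + Real.sqrt 3)) := by
  refine ⟨fun γ h₀ h₁ => ?_, by norm_num, by norm_num,
    strictAntiOn_ratioLow.mono Set.Ioo_subset_Ioc_self,
    strictMonoOn_ratioHigh.mono (Set.Ico_subset_Ico_left zero_le_one)⟩
  split_ifs with hle
  · exact four_thirds_le_ratioLow h₀ hle
  · exact four_thirds_le_ratioHigh (not_le.1 hle).le h₁
end
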